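/- In every proper 3-coloring f of the coloring lower-bound graph G_{x,y}: for every i ∈ {0,…,k−1}, f(a_1^i) = f(c_a^0) if and only if f(b_1^i) = f(c_a^0); and for every j ∈ {0,…,k−1}, f(a_2^j) = f(c_a^0) if and only if f(b_2^j) = f(c_a^0). -/
import Mathlib


/-- Vertices of the coloring lower-bound graph.  The side `s : Bool`
distinguishes Alice (`false`, the `a`'s) from Bob (`true`, the `b`'s), and
`ℓ : Bool` distinguishes index `1` (`false`) from index `2` (`true`).
So `node false false i = a_1^i`, `bar s ℓ i = s̄_ℓ^i`, `dbar s ℓ i = s̿_ℓ^i`,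
`f s ℓ h = f_S^h`, `t s ℓ h = t_S^h`, `c false m = c_a^m`, `c true m = c_b^m`. -/
inductive CVertex (k logk : ℕ) where
  | node (s ℓ : Bool) (i : Fin k)
  | bar (s ℓ : Bool) (i : Fin k)
  | dbar (s ℓ : Bool) (i : Fin k)
  | f (s ℓ : Bool) (h : Fin logk)
  | t (s ℓ : Bool) (h : Fin logk)
  | c (s : Bool) (m : Fin 3)
deriving DecidableEq

/-- The index, among `{0,1,2}`, of the `c`-node attached to the bit-nodes of the
sets indexed by `ℓ` (i.e. `1` for `ℓ = 1` and `2` for `ℓ = 2`). -/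
def ownIdx (ℓ : Bool) : Fin 3 := if ℓ then 2 else 1

/-- The "other" index: `2` for `ℓ = 1` and `1` for `ℓ = 2`. -/
def othIdx (ℓ : Bool) : Fin 3 := if ℓ then 1 else 2

/-- Base relation generating the edges (i)–(x) of the coloring lower-bound graph
`G_{x,y}`. -/
def cRel (k logk : ℕ) (x y : Fin k → Fin k → Bool) (u v : CVertex k logk) : Prop :=
  -- (i) each node s_ℓ^i is adjacent to exactly its bit-nodes bin(s_ℓ^i)
  (∃ (s ℓ : Bool) (i : Fin k) (h : Fin logk), u = CVertex.node s ℓ i ∧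
    v = if i.val.testBit h.val then CVertex.t s ℓ h else CVertex.f s ℓ h) ∨
  -- (ii) the 4-cycles on the bit-nodes
  (∃ (ℓ : Bool) (h : Fin logk),
    (u = CVertex.f false ℓ h ∧ v = CVertex.t false ℓ h) ∨
    (u = CVertex.t false ℓ h ∧ v = CVertex.f true ℓ h) ∨
    (u = CVertex.f true ℓ h ∧ v = CVertex.t true ℓ h) ∨
    (u = CVertex.t true ℓ h ∧ v = CVertex.f false ℓ h)) ∨
  -- (iii) the two triangles on the c-nodes, and c_a^m ~ c_b^m' for m ≠ m'
  (∃ (s : Bool) (m m' : Fin 3), m ≠ m' ∧ u = CVertex.c s m ∧ v = CVertex.c s m') ∨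
  (∃ (m m' : Fin 3), m ≠ m' ∧ u = CVertex.c false m ∧ v = CVertex.c true m') ∨
  -- (iv) the path edges (s_ℓ^i, s̄_ℓ^i), (s̄_ℓ^i, s̿_ℓ^i), (s̿_ℓ^i, s̄_ℓ^{i+1})
  (∃ (s ℓ : Bool) (i : Fin k), u = CVertex.node s ℓ i ∧ v = CVertex.bar s ℓ i) ∨
  (∃ (s ℓ : Bool) (i : Fin k), u = CVertex.bar s ℓ i ∧ v = CVertex.dbar s ℓ i) ∨
  (∃ (s ℓ : Bool) (i : Fin k) (hi : i.val + 1 < k),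
    u = CVertex.dbar s ℓ i ∧ v = CVertex.bar s ℓ ⟨i.val + 1, hi⟩) ∨
  -- (v) c_s^ℓ adjacent to every bit-node of the sets indexed by ℓ
  (∃ (s ℓ : Bool) (h : Fin logk), u = CVertex.c s (ownIdx ℓ) ∧
    (v = CVertex.f s ℓ h ∨ v = CVertex.t s ℓ h)) ∨
  -- (vi)–(ix) c_s^{oth ℓ} ~ s_ℓ^i, c_s^{own ℓ} ~ s̿_ℓ^i,
  --           c_s^{oth ℓ} ~ s̄_ℓ^0 and c_s^{oth ℓ} ~ s̿_ℓ^{k−1}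
  (∃ (s ℓ : Bool) (i : Fin k), u = CVertex.c s (othIdx ℓ) ∧ v = CVertex.node s ℓ i) ∨
  (∃ (s ℓ : Bool) (i : Fin k), u = CVertex.c s (ownIdx ℓ) ∧ v = CVertex.dbar s ℓ i) ∨
  (∃ (s ℓ : Bool) (i : Fin k), i.val = 0 ∧
    u = CVertex.c s (othIdx ℓ) ∧ v = CVertex.bar s ℓ i) ∨
  (∃ (s ℓ : Bool) (i : Fin k), i.val = k - 1 ∧
    u = CVertex.c s (othIdx ℓ) ∧ v = CVertex.dbar s ℓ i) ∨
  -- (x) the input edges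
  (∃ i j : Fin k, x i j = false ∧
    u = CVertex.node false false i ∧ v = CVertex.node false true j) ∨
  (∃ i j : Fin k, y i j = false ∧
    u = CVertex.node true false i ∧ v = CVertex.node true true j)

/-- The coloring lower-bound graph `G_{x,y}`. -/
def cGraph (k logk : ℕ) (x y : Fin k → Fin k → Bool) : SimpleGraph (CVertex k logk) :=
  SimpleGraph.fromRel (cRel k logk x y)

private lemma fin3_eq' (p q r v : Fin 3) (h1 : p ≠ q) (h2 : p ≠ r) (h3 : q ≠ r)
    (h4 : v ≠ q) (h5 : v ≠ r) : v = p :=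
  (by decide : ∀ p q r v : Fin 3, (p ≠ q ∧ p ≠ r ∧ q ≠ r ∧ v ≠ q ∧ v ≠ r) → v = p)
    p q r v ⟨h1, h2, h3, h4, h5⟩

private lemma fin3_mem' (p q r v : Fin 3) (h1 : p ≠ q) (h2 : p ≠ r) (h3 : q ≠ r)
    (h4 : v ≠ r) : v = p ∨ v = q :=
  (by decide : ∀ p q r v : Fin 3, (p ≠ q ∧ p ≠ r ∧ q ≠ r ∧ v ≠ r) → v = p ∨ v = q)
    p q r v ⟨h1, h2, h3, h4⟩

private lemma fin3_two' (p r v w u : Fin 3) (h1 : v = p ∨ v = r) (h2 : w = p ∨ w = r)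
    (h3 : u = p ∨ u = r) (h4 : v ≠ w) (h5 : u ≠ w) : u = v :=
  (by decide : ∀ p r v w u : Fin 3, ((v = p ∨ v = r) ∧ (w = p ∨ w = r) ∧ (u = p ∨ u = r)
      ∧ v ≠ w ∧ u ≠ w) → u = v) p r v w u ⟨h1, h2, h3, h4, h5⟩

/-- in every proper 3-coloring `f` of the coloring lower-bound
graph `G_{x,y}`: for every `i`, `f (a_1^i) = f (c_a^0)` iff `f (b_1^i) = f (c_a^0)`,
and for every `j`, `f (a_2^j) = f (c_a^0)` iff `f (b_2^j) = f (c_a^0)`. -/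
theorem cGraph_color_c0_matching (k logk : ℕ) (hk : 2 ≤ k) (hpow : k = 2 ^ logk)
    (x y : Fin k → Fin k → Bool)
    (f : (cGraph k logk x y).Coloring (Fin 3)) (ℓ : Bool) (i : Fin k) :
    f (CVertex.node false ℓ i) = f (CVertex.c false 0) ↔
      f (CVertex.node true ℓ i) = f (CVertex.c false 0) := by

  have hk0 : 0 < k := by omega
  have hadj : ∀ u v : CVertex k logk, u ≠ v → cRel k logk x y u v → f u ≠ f v :=
    fun u v hne hrel =>
      f.valid ((SimpleGraph.fromRel_adj (cRel k logk x y) u v).mpr ⟨hne, Or.inl hrel⟩)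
  have fin3_eq := fin3_eq'
  have fin3_mem := fin3_mem'
  have fin3_two := fin3_two'
  set C : Fin 3 → Fin 3 := fun m => f (CVertex.c false m)
  have htri : ∀ (s : Bool) (m m' : Fin 3), m ≠ m' →
      f (CVertex.c s m) ≠ f (CVertex.c s m') := by
    intro s m m' hmm
    exact hadj _ _ (by simpa using hmm)
      (Or.inr <| Or.inr <| Or.inl ⟨s, m, m', hmm, rfl, rfl⟩)
  have hcross : ∀ m m' : Fin 3, m ≠ m' →
      f (CVertex.c false m) ≠ f (CVertex.c true m') := by
    intro m m' hmm
    exact hadj _ _ (by simp)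
      (Or.inr <| Or.inr <| Or.inr <| Or.inl ⟨m, m', hmm, rfl, rfl⟩)
  have hCb : ∀ m, f (CVertex.c true m) = C m := by
    have hne : ∀ m m' : Fin 3, m ≠ m' → f (CVertex.c true m) ≠ C m' :=
      fun m m' h => fun hc => hcross m' m (Ne.symm h) hc.symm
    intro m
    fin_cases m
    · exact fin3_eq (C 0) (C 1) (C 2) _ (htri false 0 1 (by decide)) (htri false 0 2 (by decide))
        (htri false 1 2 (by decide)) (hne 0 1 (by decide)) (hne 0 2 (by decide))
    · exact fin3_eq (C 1) (C 0) (C 2) _ (htri false 1 0 (by decide)) (htri false 1 2 (by decide))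
        (htri false 0 2 (by decide)) (hne 1 0 (by decide)) (hne 1 2 (by decide))
    · exact fin3_eq (C 2) (C 0) (C 1) _ (htri false 2 0 (by decide)) (htri false 2 1 (by decide))
        (htri false 0 1 (by decide)) (hne 2 0 (by decide)) (hne 2 1 (by decide))
  have hCs : ∀ (s : Bool) (m : Fin 3), f (CVertex.c s m) = C m := by
    intro s m; cases s
    · rfl
    · exact hCb m
  have hCne : ∀ m m' : Fin 3, m ≠ m' → C m ≠ C m' := htri false
  have h01 : (0 : Fin 3) ≠ ownIdx ℓ := by cases ℓ <;> decide
  have h02 : (0 : Fin 3) ≠ othIdx ℓ := by cases ℓ <;> decide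
  have h12 : ownIdx ℓ ≠ othIdx ℓ := by cases ℓ <;> decide
  -- bit nodes avoid the own color
  have hf_ne : ∀ (s : Bool) (h : Fin logk), f (CVertex.f s ℓ h) ≠ C (ownIdx ℓ) := by
    intro s h
    have := hadj (CVertex.c s (ownIdx ℓ)) (CVertex.f s ℓ h) (by simp)
      (Or.inr <| Or.inr <| Or.inr <| Or.inr <| Or.inr <| Or.inr <| Or.inr <| Or.inl
        ⟨s, ℓ, h, rfl, Or.inl rfl⟩)
    rw [hCs] at this
    exact this.symm
  have ht_ne : ∀ (s : Bool) (h : Fin logk), f (CVertex.t s ℓ h) ≠ C (ownIdx ℓ) := by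
    intro s h
    have := hadj (CVertex.c s (ownIdx ℓ)) (CVertex.t s ℓ h) (by simp)
      (Or.inr <| Or.inr <| Or.inr <| Or.inr <| Or.inr <| Or.inr <| Or.inr <| Or.inl
        ⟨s, ℓ, h, rfl, Or.inr rfl⟩)
    rw [hCs] at this
    exact this.symm
  have hfmem : ∀ (s : Bool) (h : Fin logk),
      f (CVertex.f s ℓ h) = C 0 ∨ f (CVertex.f s ℓ h) = C (othIdx ℓ) :=
    fun s h => fin3_mem _ _ _ _ (hCne 0 (othIdx ℓ) h02) (hCne 0 (ownIdx ℓ) h01)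
      (hCne (othIdx ℓ) (ownIdx ℓ) (Ne.symm h12)) (hf_ne s h)
  have htmem : ∀ (s : Bool) (h : Fin logk),
      f (CVertex.t s ℓ h) = C 0 ∨ f (CVertex.t s ℓ h) = C (othIdx ℓ) :=
    fun s h => fin3_mem _ _ _ _ (hCne 0 (othIdx ℓ) h02) (hCne 0 (ownIdx ℓ) h01)
      (hCne (othIdx ℓ) (ownIdx ℓ) (Ne.symm h12)) (ht_ne s h)
  -- the 4-cycle on the bit nodes
  have hfAtA : ∀ h : Fin logk, f (CVertex.f false ℓ h) ≠ f (CVertex.t false ℓ h) :=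
    fun h => hadj _ _ (by simp) (Or.inr <| Or.inl ⟨ℓ, h, Or.inl ⟨rfl, rfl⟩⟩)
  have htAfB : ∀ h : Fin logk, f (CVertex.t false ℓ h) ≠ f (CVertex.f true ℓ h) :=
    fun h => hadj _ _ (by simp) (Or.inr <| Or.inl ⟨ℓ, h, Or.inr <| Or.inl ⟨rfl, rfl⟩⟩)
  have hfBtB : ∀ h : Fin logk, f (CVertex.f true ℓ h) ≠ f (CVertex.t true ℓ h) :=
    fun h => hadj _ _ (by simp) (Or.inr <| Or.inl ⟨ℓ, h, Or.inr <| Or.inr <| Or.inl ⟨rfl, rfl⟩⟩)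
  have hfeq : ∀ h : Fin logk, f (CVertex.f true ℓ h) = f (CVertex.f false ℓ h) :=
    fun h => fin3_two (C 0) (C (othIdx ℓ)) _ _ _ (hfmem false h) (htmem false h)
      (hfmem true h) (hfAtA h) (Ne.symm (htAfB h))
  have hteq : ∀ h : Fin logk, f (CVertex.t true ℓ h) = f (CVertex.t false ℓ h) :=
    fun h => fin3_two (C 0) (C (othIdx ℓ)) _ _ _ (htmem false h) (hfmem true h)
      (htmem true h) (htAfB h) (Ne.symm (hfBtB h))
  -- node facts
  have hnode_ne : ∀ (s : Bool) (i' : Fin k), f (CVertex.node s ℓ i') ≠ C (othIdx ℓ) := by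
    intro s i'
    have := hadj (CVertex.c s (othIdx ℓ)) (CVertex.node s ℓ i') (by simp)
      (Or.inr <| Or.inr <| Or.inr <| Or.inr <| Or.inr <| Or.inr <| Or.inr <| Or.inr <| Or.inl
        ⟨s, ℓ, i', rfl, rfl⟩)
    rw [hCs] at this
    exact this.symm
  have hnode_mem : ∀ (s : Bool) (i' : Fin k),
      f (CVertex.node s ℓ i') = C 0 ∨ f (CVertex.node s ℓ i') = C (ownIdx ℓ) :=
    fun s i' => fin3_mem _ _ _ _ (hCne 0 (ownIdx ℓ) h01) (hCne 0 (othIdx ℓ) h02)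
      (hCne (ownIdx ℓ) (othIdx ℓ) h12) (hnode_ne s i')
  -- a node colored C 0 determines all its bits
  have key : ∀ (s : Bool) (i' : Fin k), f (CVertex.node s ℓ i') = C 0 →
      ∀ h : Fin logk, (i'.val.testBit h.val = true ↔ f (CVertex.f false ℓ h) = C 0) := by
    intro s i' hP h
    cases hTB : i'.val.testBit h.val with
    | false =>
      have hne := hadj (CVertex.node s ℓ i') (CVertex.f s ℓ h) (by simp)
        (Or.inl ⟨s, ℓ, i', h, rfl, by simp [hTB]⟩)
      have hfs : f (CVertex.f s ℓ h) = f (CVertex.f false ℓ h) := by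
        cases s
        · rfl
        · exact hfeq h
      rw [hfs] at hne
      exact iff_of_false (by simp) (fun hc => hne (hP.trans hc.symm))
    | true =>
      have hne := hadj (CVertex.node s ℓ i') (CVertex.t s ℓ h) (by simp)
        (Or.inl ⟨s, ℓ, i', h, rfl, by simp [hTB]⟩)
      have hts : f (CVertex.t s ℓ h) = f (CVertex.t false ℓ h) := by
        cases s
        · rfl
        · exact hteq h
      rw [hts] at hne
      have htne : f (CVertex.t false ℓ h) ≠ C 0 := fun hc => hne (hP.trans hc.symm)
      have htoth : f (CVertex.t false ℓ h) = C (othIdx ℓ) := (htmem false h).resolve_left htne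
      have hf0 : f (CVertex.f false ℓ h) = C 0 :=
        (hfmem false h).resolve_right (fun hc => hfAtA h (hc.trans htoth.symm))
      exact iff_of_true rfl hf0
  -- uniqueness of the C-0 colored node, even across sides
  have huniq : ∀ (s s' : Bool) (i1 i2 : Fin k), f (CVertex.node s ℓ i1) = C 0 →
      f (CVertex.node s' ℓ i2) = C 0 → i1 = i2 := by
    intro s s' i1 i2 h1 h2
    apply Fin.ext
    apply Nat.eq_of_testBit_eq
    intro n
    by_cases hn : n < logk
    · have e1 : (i1.val.testBit n = true) ↔ (f (CVertex.f false ℓ ⟨n, hn⟩) = C 0) :=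
        key s i1 h1 ⟨n, hn⟩
      have e2 : (i2.val.testBit n = true) ↔ (f (CVertex.f false ℓ ⟨n, hn⟩) = C 0) :=
        key s' i2 h2 ⟨n, hn⟩
      have hbb := e1.trans e2.symm
      cases hb1 : i1.val.testBit n <;> cases hb2 : i2.val.testBit n
      · rfl
      · rw [hb1, hb2] at hbb; simp at hbb
      · rw [hb1, hb2] at hbb; simp at hbb
      · rfl
    · have hb : ∀ j : Fin k, j.val.testBit n = false := fun j =>
        Nat.testBit_lt_two_pow (lt_of_lt_of_le j.isLt
          (by rw [hpow]; exact Nat.pow_le_pow_right (by norm_num) (le_of_not_gt hn)))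
      rw [hb i1, hb i2]
  -- existence of a C-0 colored node on each side (the path gadget)
  have hexist : ∀ s : Bool, ∃ i' : Fin k, f (CVertex.node s ℓ i') = C 0 := by
    intro s
    by_contra hcon
    push_neg at hcon
    have hall : ∀ i' : Fin k, f (CVertex.node s ℓ i') = C (ownIdx ℓ) :=
      fun i' => (hnode_mem s i').resolve_left (hcon i')
    have hbar_node : ∀ j : Fin k, f (CVertex.bar s ℓ j) ≠ C (ownIdx ℓ) := by
      intro j hc
      exact hadj (CVertex.node s ℓ j) (CVertex.bar s ℓ j) (by simp)
        (Or.inr <| Or.inr <| Or.inr <| Or.inr <| Or.inl ⟨s, ℓ, j, rfl, rfl⟩)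
        ((hall j).trans hc.symm)
    have hdbar_own : ∀ j : Fin k, f (CVertex.dbar s ℓ j) ≠ C (ownIdx ℓ) := by
      intro j
      have := hadj (CVertex.c s (ownIdx ℓ)) (CVertex.dbar s ℓ j) (by simp)
        (Or.inr <| Or.inr <| Or.inr <| Or.inr <| Or.inr <| Or.inr <| Or.inr <| Or.inr <|
          Or.inr <| Or.inl ⟨s, ℓ, j, rfl, rfl⟩)
      rw [hCs] at this
      exact this.symm
    have hbardbar : ∀ j : Fin k, f (CVertex.bar s ℓ j) ≠ f (CVertex.dbar s ℓ j) :=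
      fun j => hadj _ _ (by simp)
        (Or.inr <| Or.inr <| Or.inr <| Or.inr <| Or.inr <| Or.inl ⟨s, ℓ, j, rfl, rfl⟩)
    have hchain : ∀ n, ∀ hn : n < k, f (CVertex.bar s ℓ ⟨n, hn⟩) = C 0 ∧
        f (CVertex.dbar s ℓ ⟨n, hn⟩) = C (othIdx ℓ) := by
      intro n
      induction n with
      | zero =>
        intro hn
        have hb1 : f (CVertex.bar s ℓ ⟨0, hn⟩) ≠ C (othIdx ℓ) := by
          have := hadj (CVertex.c s (othIdx ℓ)) (CVertex.bar s ℓ ⟨0, hn⟩) (by simp)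
            (Or.inr <| Or.inr <| Or.inr <| Or.inr <| Or.inr <| Or.inr <| Or.inr <| Or.inr <|
              Or.inr <| Or.inr <| Or.inl ⟨s, ℓ, ⟨0, hn⟩, rfl, rfl, rfl⟩)
          rw [hCs] at this
          exact this.symm
        have hbar0 : f (CVertex.bar s ℓ ⟨0, hn⟩) = C 0 :=
          fin3_eq _ _ _ _ (hCne 0 (ownIdx ℓ) h01) (hCne 0 (othIdx ℓ) h02)
            (hCne (ownIdx ℓ) (othIdx ℓ) h12) (hbar_node ⟨0, hn⟩) hb1
        refine ⟨hbar0, ?_⟩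
        refine fin3_eq _ _ _ _ (Ne.symm (hCne 0 (othIdx ℓ) h02))
          (hCne (othIdx ℓ) (ownIdx ℓ) (Ne.symm h12)) (hCne 0 (ownIdx ℓ) h01) ?_
          (hdbar_own ⟨0, hn⟩)
        rw [← hbar0]
        exact fun hc => hbardbar ⟨0, hn⟩ hc.symm
      | succ n ih =>
        intro hn
        have hnk : n < k := by omega
        obtain ⟨hbar, hdbar⟩ := ih hnk
        have hb1 : f (CVertex.bar s ℓ ⟨n + 1, hn⟩) ≠ C (othIdx ℓ) := by
          have := hadj (CVertex.dbar s ℓ ⟨n, hnk⟩) (CVertex.bar s ℓ ⟨n + 1, hn⟩) (by simp)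
            (Or.inr <| Or.inr <| Or.inr <| Or.inr <| Or.inr <| Or.inr <| Or.inl
              ⟨s, ℓ, ⟨n, hnk⟩, hn, rfl, rfl⟩)
          rw [hdbar] at this
          exact this.symm
        have hbar1 : f (CVertex.bar s ℓ ⟨n + 1, hn⟩) = C 0 :=
          fin3_eq _ _ _ _ (hCne 0 (ownIdx ℓ) h01) (hCne 0 (othIdx ℓ) h02)
            (hCne (ownIdx ℓ) (othIdx ℓ) h12) (hbar_node ⟨n + 1, hn⟩) hb1
        refine ⟨hbar1, ?_⟩
        refine fin3_eq _ _ _ _ (Ne.symm (hCne 0 (othIdx ℓ) h02))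
          (hCne (othIdx ℓ) (ownIdx ℓ) (Ne.symm h12)) (hCne 0 (ownIdx ℓ) h01) ?_
          (hdbar_own ⟨n + 1, hn⟩)
        rw [← hbar1]
        exact fun hc => hbardbar ⟨n + 1, hn⟩ hc.symm
    have hlast := (hchain (k - 1) (by omega)).2
    have hfinal : f (CVertex.dbar s ℓ ⟨k - 1, by omega⟩) ≠ C (othIdx ℓ) := by
      have := hadj (CVertex.c s (othIdx ℓ)) (CVertex.dbar s ℓ ⟨k - 1, by omega⟩) (by simp)
        (Or.inr <| Or.inr <| Or.inr <| Or.inr <| Or.inr <| Or.inr <| Or.inr <| Or.inr <|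
          Or.inr <| Or.inr <| Or.inr <| Or.inl ⟨s, ℓ, ⟨k - 1, by omega⟩, rfl, rfl, rfl⟩)
      rw [hCs] at this
      exact this.symm
    exact hfinal hlast
  constructor
  · intro h1
    obtain ⟨j, hj⟩ := hexist true
    rw [huniq false true i j h1 hj]
    exact hj
  · intro h1
    obtain ⟨j, hj⟩ := hexist false
    rw [huniq true false i j h1 hj]
    exact hj
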